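/- Let a₀ ∈ {0,…,9} and Y = 10^k. Define F_Y(θ) = (1/9^k)|Σ_{n<Y, n has no digit a₀} e(nθ)|. Suppose q < Y^{1/3} can be written q = q₁q₂ with gcd(q₁,10) = 1 and q₁ > 1, and |η| < Y^{−2/3}/2. Then for any integer a coprime to q, F_Y(a/q + η) ≤ C·exp(−c·log Y / log q) for absolute constants C, c > 0. -/

import Mathlib

/-!
Restricting the digits makes the exponential sum factor over the digit positions:
`F a₀ k θ = ∏_{i<k} |∑_{d ≠ a₀} e(d 10^i θ)| / 9`. Every factor is at most `1`, and at most `8/9`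
once `10^i θ` is at distance `≥ 1/20` from `ℤ` (geometric-series bound for the full digit sum).
For `3 i ≤ k` the point `10^i θ` stays at distance `≥ 1/(2q)` from `ℤ`: `q ∤ 10^i a` because of
the factor `q₁`, which is coprime to `10` and to `a`, and `10^i |η| ≤ 1/(2q)`. Multiplication by
`10` scales this distance exactly while it is below `1/20`, so every window of `log₁₀ q + 1`
consecutive exponents below `k/3` contains a good one. This gives `≫ k / log q` factors `≤ 8/9`.
-/

/-- `e(x) = exp(2πix)`. -/
noncomputable def e (x : ℝ) : ℂ := Complex.exp (2 * Real.pi * Complex.I * x)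

/-- The normalized Fourier transform `F_{10^k}(θ)` of the integers below `10^k`
all of whose `k` base-10 digits (leading zeros allowed) differ from `a₀`. -/
noncomputable def F (a₀ k : ℕ) (θ : ℝ) : ℝ :=
  (1 / 9^k : ℝ) *
    ‖(∑ n ∈ (Finset.range (10^k)).filter (fun n => ∀ i < k, n / 10^i % 10 ≠ a₀),
      e ((n : ℝ) * θ))‖

open Finset Real

lemma e_add (x y : ℝ) : e (x + y) = e x * e y := by
  simp only [e, ← Complex.exp_add]; push_cast; ring_nf

lemma norm_e (x : ℝ) : ‖e x‖ = 1 := by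
  rw [e, show 2 * (π : ℂ) * Complex.I * x = ((2 * π * x : ℝ) : ℂ) * Complex.I by push_cast; ring]
  exact Complex.norm_exp_ofReal_mul_I _

lemma e_natCast_mul (d : ℕ) (x : ℝ) : e (d * x) = e x ^ d := by
  simp only [e, ← Complex.exp_nat_mul]; push_cast; ring_nf

lemma norm_e_sub_one (t : ℝ) : ‖e t - 1‖ = 2 * |sin (π * t)| := by
  rw [e, show 2 * (π : ℂ) * Complex.I * t = Complex.I * ((2 * π * t : ℝ) : ℂ) by push_cast; ring,
    Complex.norm_exp_I_mul_ofReal_sub_one, norm_mul, Real.norm_eq_abs, Real.norm_eq_abs,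
    show 2 * π * t / 2 = π * t by ring]
  norm_num

noncomputable def intDist (x : ℝ) : ℝ := |x - round x|

lemma intDist_natCast_mul {n : ℕ} {x : ℝ} (h : n * intDist x < 1 / 2) :
    intDist (n * x) = n * intDist x := by
  have hsmall : |n * (x - round x)| < 1 / 2 := by
    rwa [abs_mul, Nat.abs_cast]
  have hround : round (n * x) = n * round x := by
    rw [show (n : ℝ) * x = n * (x - round x) + ((n * round x : ℤ) : ℝ) by push_cast; ring,
      round_add_intCast, round_eq_zero_iff.2 ⟨by linarith [neg_abs_le (n * (x - round x))],
        by linarith [le_abs_self (n * (x - round x))]⟩, zero_add]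
  rw [intDist, intDist, hround, Int.cast_mul, Int.cast_natCast, ← mul_sub, abs_mul, Nat.abs_cast]

lemma intDist_sub_abs_le (x ε : ℝ) : intDist x - |ε| ≤ intDist (x + ε) := by
  have h := round_le x (round (x + ε))
  have h' := abs_sub (x + ε - round (x + ε)) ε
  rw [show x + ε - round (x + ε) - ε = x - round (x + ε) by ring] at h'
  unfold intDist
  linarith

lemma one_div_le_intDist_div {q : ℕ} {m : ℤ} (hm : ¬ (q : ℤ) ∣ m) : 1 / q ≤ intDist (m / q) := by
  rcases Nat.eq_zero_or_pos q with rfl | hq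
  · rw [Nat.cast_zero, div_zero]; exact abs_nonneg _
  have hq' : (0 : ℝ) < q := Nat.cast_pos.2 hq
  have hne : m - q * round ((m : ℝ) / q) ≠ 0 := fun h => hm ⟨_, sub_eq_zero.1 h⟩
  have hone : (1 : ℝ) ≤ |((m - q * round ((m : ℝ) / q) : ℤ) : ℝ)| := by
    rw [← Int.cast_abs]; exact_mod_cast Int.one_le_abs hne
  rw [intDist, show (m : ℝ) / q - round ((m : ℝ) / q)
      = ((m - q * round ((m : ℝ) / q) : ℤ) : ℝ) / q by push_cast; field_simp,
    abs_div, Nat.abs_cast]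
  exact div_le_div_of_nonneg_right hone hq'.le

lemma one_div_two_mul_le_intDist {q : ℕ} {m : ℤ} {ε : ℝ} (hm : ¬ (q : ℤ) ∣ m)
    (hε : |ε| ≤ 1 / (2 * q)) : 1 / (2 * q) ≤ intDist (m / q + ε) := by
  have h := one_div_le_intDist_div hm
  have := intDist_sub_abs_le (m / q) ε
  have hsplit : (1 : ℝ) / q = 1 / (2 * q) + 1 / (2 * q) := by ring
  linarith

lemma one_div_seven_le_abs_sin {t : ℝ} (h : 1 / 20 ≤ intDist t) : 1 / 7 ≤ |sin (π * t)| := by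
  set v := t - round t
  have hv : |v| ≤ 1 / 2 := abs_sub_round t
  have hv' : 1 / 20 ≤ |v| := h
  have hperiodic : |sin (π * t)| = sin (π * |v|) := by
    have hle : |π * v| ≤ π := by rw [abs_mul, abs_of_pos pi_pos]; nlinarith [pi_pos]
    rw [show π * t = π * v + round t * π by ring, sin_add_int_mul_pi, abs_mul, abs_zpow, abs_neg,
      abs_one, one_zpow, one_mul, abs_sin_eq_sin_abs_of_abs_le_pi hle, abs_mul, abs_of_pos pi_pos]
  have hmono : sin (π / 20) ≤ sin (π * |v|) :=
    sin_le_sin_of_le_of_le_pi_div_two (by linarith [pi_pos]) (by nlinarith [pi_pos])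
      (by nlinarith [pi_pos])
  have hsmall : 1 / 7 ≤ sin (π / 20) := by
    have hcube : (π / 20) ^ 3 ≤ 1 / 100 := by
      have : π / 20 ≤ 1 / 5 := by linarith [pi_lt_d2]
      calc (π / 20) ^ 3 ≤ (1 / 5) ^ 3 := by gcongr
        _ ≤ 1 / 100 := by norm_num
    linarith [sin_gt_sub_cube (x := π / 20) (by positivity), pi_gt_three]
  rw [hperiodic]
  linarith

lemma norm_sum_range_ten_e_le {t : ℝ} (h : 1 / 20 ≤ intDist t) :
    ‖∑ d ∈ range 10, e (d * t)‖ ≤ 7 := by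
  have hden : 2 / 7 ≤ ‖e t - 1‖ := by
    rw [norm_e_sub_one]; linarith [one_div_seven_le_abs_sin h]
  have hne : e t ≠ 1 := fun h1 => by rw [h1, sub_self, norm_zero] at hden; norm_num at hden
  have hnum : ‖e t ^ 10 - 1‖ ≤ 2 :=
    (norm_sub_le _ _).trans (by rw [norm_pow, norm_e, norm_one]; norm_num)
  simp_rw [e_natCast_mul]
  rw [geom_sum_eq hne, norm_div]
  calc ‖e t ^ 10 - 1‖ / ‖e t - 1‖ ≤ 2 / (2 / 7) := div_le_div₀ (by norm_num) hnum (by norm_num) hden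
    _ = 7 := by norm_num

section DigitRestricted

variable (b : ℕ) (p : ℕ → Prop) [DecidablePred p]

def digitRestricted (k : ℕ) : Finset ℕ :=
  (range (b ^ k)).filter fun n => ∀ i < k, p (n / b ^ i % b)

variable {b}

lemma mem_digitRestricted_succ (hb : 0 < b) {k n : ℕ} :
    n ∈ digitRestricted b p (k + 1) ↔
      n % b ∈ (range b).filter p ∧ n / b ∈ digitRestricted b p k := by
  simp only [digitRestricted, mem_filter, mem_range, Nat.forall_lt_succ_left, pow_zero,
    Nat.div_one, Nat.div_div_eq_div_mul, ← pow_succ', Nat.div_lt_iff_lt_mul hb, ← pow_succ,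
    Nat.mod_lt n hb, true_and]
  tauto

lemma sum_digitRestricted_e (hb : 0 < b) (k : ℕ) (θ : ℝ) :
    ∑ n ∈ digitRestricted b p k, e (n * θ) =
      ∏ i ∈ range k, ∑ d ∈ (range b).filter p, e (d * (b ^ i * θ)) := by
  induction k generalizing θ with
  | zero => simp [digitRestricted, e]
  | succ k ih =>
    have hsplit : ∑ n ∈ digitRestricted b p (k + 1), e (n * θ) =
        ∑ x ∈ (range b).filter p ×ˢ digitRestricted b p k, e (x.1 * θ) * e (x.2 * (b * θ)) := by
      refine sum_nbij' (fun n => (n % b, n / b)) (fun x => x.1 + b * x.2) ?_ ?_ ?_ ?_ ?_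
      · intro n hn
        simpa [mem_product] using (mem_digitRestricted_succ p hb).1 hn
      · intro x hx
        rw [mem_product] at hx
        have h1 : x.1 < b := mem_range.1 (mem_filter.1 hx.1).1
        rw [mem_digitRestricted_succ p hb, Nat.add_mul_mod_self_left, Nat.mod_eq_of_lt h1,
          Nat.add_mul_div_left _ _ hb, Nat.div_eq_of_lt h1, zero_add]
        exact hx
      · intro n _
        exact Nat.mod_add_div n b
      · intro x hx
        rw [mem_product, mem_filter, mem_range] at hx
        simp [Nat.add_mul_mod_self_left, Nat.mod_eq_of_lt hx.1.1, Nat.add_mul_div_left _ _ hb,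
          Nat.div_eq_of_lt hx.1.1]
      · intro n _
        rw [← e_add]
        congr 1
        conv_lhs => rw [← Nat.mod_add_div n b]
        push_cast; ring
    rw [hsplit, sum_product]
    dsimp only
    rw [← sum_mul_sum, ih, prod_range_succ', pow_zero, one_mul, mul_comm]
    congr 1
    refine prod_congr rfl fun i _ => sum_congr rfl fun d _ => congrArg e ?_
    ring

end DigitRestricted

noncomputable def digitSum (a₀ : ℕ) (t : ℝ) : ℂ :=
  ∑ d ∈ (range 10).filter (· ≠ a₀), e (d * t)

lemma norm_digitSum_le_nine {a₀ : ℕ} (ha₀ : a₀ ≤ 9) (t : ℝ) : ‖digitSum a₀ t‖ ≤ 9 := by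
  have hcard : ((range 10).filter (· ≠ a₀)).card = 9 := by
    rw [filter_ne', card_erase_of_mem (mem_range.2 (by omega)), card_range]
  calc ‖digitSum a₀ t‖ ≤ ∑ d ∈ (range 10).filter (· ≠ a₀), ‖e (d * t)‖ := norm_sum_le _ _
    _ = 9 := by simp only [norm_e, sum_const, hcard, nsmul_eq_mul]; norm_num

lemma norm_digitSum_le_eight {a₀ : ℕ} (ha₀ : a₀ ≤ 9) {t : ℝ} (h : 1 / 20 ≤ intDist t) :
    ‖digitSum a₀ t‖ ≤ 8 := by
  have hsplit : digitSum a₀ t = ∑ d ∈ range 10, e (d * t) - e (a₀ * t) := by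
    rw [digitSum, filter_ne', eq_sub_iff_add_eq, sum_erase_add _ _ (mem_range.2 (by omega))]
  calc ‖digitSum a₀ t‖ ≤ ‖∑ d ∈ range 10, e (d * t)‖ + ‖e (a₀ * t)‖ := hsplit ▸ norm_sub_le _ _
    _ ≤ 7 + 1 := by rw [norm_e]; linarith [norm_sum_range_ten_e_le h]
    _ = 8 := by norm_num

lemma F_eq_prod (a₀ k : ℕ) (θ : ℝ) : F a₀ k θ = ∏ i ∈ range k, ‖digitSum a₀ (10 ^ i * θ)‖ / 9 := by
  have h := sum_digitRestricted_e (fun d => d ≠ a₀) (by norm_num : 0 < 10) k θ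
  push_cast at h
  rw [F, prod_div_distrib, prod_const, card_range, ← norm_prod, one_div_mul_eq_div]
  exact congrArg (‖·‖ / 9 ^ k) h

lemma F_le_pow_card {a₀ : ℕ} (ha₀ : a₀ ≤ 9) (k : ℕ) (θ : ℝ) :
    F a₀ k θ ≤ (8 / 9) ^ ((range k).filter fun j => 1 / 20 ≤ intDist (10 ^ j * θ)).card := by
  set J := (range k).filter fun j => 1 / 20 ≤ intDist (10 ^ j * θ)
  have hnonneg : ∀ i ∈ range k, 0 ≤ ‖digitSum a₀ (10 ^ i * θ)‖ / 9 := fun _ _ => by positivity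
  rw [F_eq_prod]
  calc ∏ i ∈ range k, ‖digitSum a₀ (10 ^ i * θ)‖ / 9
      ≤ ∏ i ∈ J, ‖digitSum a₀ (10 ^ i * θ)‖ / 9 :=
        prod_le_prod_of_subset_of_le_one (filter_subset _ _) hnonneg fun i _ _ => by
          linarith [norm_digitSum_le_nine ha₀ (10 ^ i * θ)]
    _ ≤ ∏ _i ∈ J, (8 / 9 : ℝ) :=
        prod_le_prod (fun i hi => hnonneg i (filter_subset _ _ hi)) fun i hi => by
          linarith [norm_digitSum_le_eight ha₀ (mem_filter.1 hi).2]
    _ = (8 / 9) ^ J.card := prod_const _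

lemma exists_intDist_ten_pow_mul_ge {x δ : ℝ} {L : ℕ} (hx : δ ≤ intDist x)
    (hL : 1 / 20 ≤ 10 ^ L * δ) : ∃ s ≤ L, 1 / 20 ≤ intDist (10 ^ s * x) := by
  by_contra! hsmall
  have hgrow : ∀ s ≤ L, intDist (10 ^ s * x) = 10 ^ s * intDist x := by
    intro s hs
    induction s with
    | zero => simp
    | succ s ih =>
      have h10 := intDist_natCast_mul (n := 10) (x := 10 ^ s * x)
        (by push_cast; linarith [hsmall s (by omega)])
      push_cast at h10
      rw [pow_succ', mul_assoc, h10, ih (by omega), mul_assoc]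
  have := hsmall L le_rfl
  rw [hgrow L le_rfl] at this
  nlinarith [pow_pos (by norm_num : (0 : ℝ) < 10) L]

lemma le_card_filter_range_mul {P : ℕ → Prop} [DecidablePred P] {B m : ℕ}
    (h : ∀ b < B, ∃ j, b * m ≤ j ∧ j < (b + 1) * m ∧ P j) :
    B ≤ ((range (B * m)).filter P).card := by
  induction B with
  | zero => simp
  | succ B ih =>
    obtain ⟨j, hjl, hju, hj⟩ := h B (lt_add_one B)
    have hnotin : j ∉ (range (B * m)).filter P := by simp [hjl]
    have hsub : insert j ((range (B * m)).filter P) ⊆ (range ((B + 1) * m)).filter P := by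
      refine insert_subset (mem_filter.2 ⟨mem_range.2 hju, hj⟩) (filter_subset_filter _ ?_)
      exact range_subset_range.2 (Nat.mul_le_mul_right _ (Nat.le_succ B))
    calc B + 1 ≤ ((range (B * m)).filter P).card + 1 := by
          gcongr; exact ih fun b hb => h b (by omega)
      _ = (insert j ((range (B * m)).filter P)).card := (card_insert_of_notMem hnotin).symm
      _ ≤ _ := card_le_card hsub

lemma le_card_filter_intDist_ten_pow_mul_ge {θ δ : ℝ} {k N L : ℕ} (hN : N ≤ k)
    (hfar : ∀ i ≤ N, δ ≤ intDist (10 ^ i * θ)) (hL : 1 / 20 ≤ 10 ^ L * δ) :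
    N / (L + 1) ≤ ((range k).filter fun j => 1 / 20 ≤ intDist (10 ^ j * θ)).card := by
  have hblocks : ∀ b < N / (L + 1), ∃ j, b * (L + 1) ≤ j ∧ j < (b + 1) * (L + 1) ∧
      1 / 20 ≤ intDist (10 ^ j * θ) := by
    intro b hb
    have hstart : b * (L + 1) ≤ N :=
      (Nat.mul_le_mul_right _ hb.le).trans (Nat.div_mul_le_self _ _)
    obtain ⟨s, hs, hgood⟩ := exists_intDist_ten_pow_mul_ge (hfar _ hstart) hL
    refine ⟨b * (L + 1) + s, by omega, by rw [add_mul]; omega, ?_⟩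
    rwa [pow_add, mul_comm (10 ^ (b * (L + 1)) : ℝ), mul_assoc]
  refine (le_card_filter_range_mul hblocks).trans (card_le_card (filter_subset_filter _ ?_))
  exact range_subset_range.2 ((Nat.div_mul_le_self _ _).trans hN)

lemma not_dvd_pow_mul {R : Type*} [CommSemiring R] {q₁ q₂ a c : R} (hq₁ : ¬IsUnit q₁)
    (hc : IsCoprime q₁ c) (ha : IsCoprime a (q₁ * q₂)) (i : ℕ) : ¬ q₁ * q₂ ∣ c ^ i * a := by
  intro h
  have hdvd : q₁ ∣ a := (hc.pow_right (n := i)).dvd_of_dvd_mul_left (dvd_of_mul_right_dvd h)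
  exact hq₁ (ha.of_mul_right_left.isUnit_of_dvd' hdvd dvd_rfl)

lemma abs_ten_pow_mul_le {k i q : ℕ} {η : ℝ} (hi : 3 * i ≤ k) (hq₀ : 0 < q)
    (hq : (q : ℝ) < ((10 : ℝ) ^ k) ^ ((1 : ℝ) / 3))
    (hη : |η| < ((10 : ℝ) ^ k) ^ (-(2 : ℝ) / 3) / 2) : |10 ^ i * η| ≤ 1 / (2 * q) := by
  set T := ((10 : ℝ) ^ k) ^ ((1 : ℝ) / 3)
  have hT : 0 < T := by positivity
  have hcube : T ^ 3 = 10 ^ k := by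
    rw [← Real.rpow_natCast, ← Real.rpow_mul (by positivity)]; norm_num
  have hη' : |η| < (T ^ 2)⁻¹ / 2 := by
    rwa [← Real.rpow_natCast, ← Real.rpow_mul (by positivity), ← Real.rpow_neg (by positivity),
      show -((1 : ℝ) / 3 * (2 : ℕ)) = -2 / 3 by norm_num]
  have hi' : (10 : ℝ) ^ i ≤ T := by
    refine le_of_pow_le_pow_left₀ (by norm_num : 3 ≠ 0) hT.le ?_
    rw [hcube, ← pow_mul, mul_comm]
    exact pow_le_pow_right₀ (by norm_num) hi
  have hq' : (0 : ℝ) < q := Nat.cast_pos.2 hq₀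
  rw [abs_mul, abs_of_pos (by positivity), le_div_iff₀ (by positivity)]
  calc 10 ^ i * |η| * (2 * q) ≤ T * ((T ^ 2)⁻¹ / 2) * (2 * T) := by gcongr
    _ = 1 := by field_simp

lemma one_div_two_mul_le_intDist_ten_pow_mul {q₁ q₂ k i : ℕ} {a : ℤ} {η : ℝ} (hq₁ : 1 < q₁)
    (hq₁10 : Nat.gcd q₁ 10 = 1) (hq₂ : 0 < q₂) (ha : IsCoprime a ((q₁ * q₂ : ℕ) : ℤ))
    (hqY : ((q₁ * q₂ : ℕ) : ℝ) < ((10 : ℝ) ^ k) ^ ((1 : ℝ) / 3))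
    (hη : |η| < ((10 : ℝ) ^ k) ^ (-(2 : ℝ) / 3) / 2) (hi : 3 * i ≤ k) :
    1 / (2 * (q₁ * q₂ : ℕ)) ≤ intDist (10 ^ i * ((a : ℝ) / (q₁ * q₂ : ℕ) + η)) := by
  have hnd : ¬ ((q₁ * q₂ : ℕ) : ℤ) ∣ 10 ^ i * a := by
    rw [Nat.cast_mul] at ha ⊢
    exact not_dvd_pow_mul (by rw [Int.isUnit_iff]; omega) (Nat.isCoprime_iff_coprime.2 hq₁10) ha i
  convert one_div_two_mul_le_intDist hnd
    (abs_ten_pow_mul_le hi (Nat.mul_pos (by omega) hq₂) hqY hη) using 2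
  push_cast; ring

lemma one_div_twenty_le_ten_pow_log_mul {q : ℕ} (hq : 0 < q) :
    1 / 20 ≤ 10 ^ Nat.log 10 q * (1 / (2 * q : ℝ)) := by
  have h : (q : ℝ) < 10 ^ Nat.log 10 q * 10 := by
    exact_mod_cast pow_succ 10 (Nat.log 10 q) ▸ Nat.lt_pow_succ_log_self (by norm_num) q
  rw [mul_one_div, le_div_iff₀ (by positivity)]
  linarith

lemma natLog_add_one_le {q : ℕ} (hq : 2 ≤ q) : (Nat.log 10 q + 1 : ℝ) ≤ 3 * log q := by
  have hlog10 : 1 ≤ log 10 := by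
    rw [le_log_iff_exp_le (by norm_num)]; linarith [exp_one_lt_d9]
  have hlogq : 1 / 2 ≤ log q :=
    (log_two_gt_d9.le.trans' (by norm_num)).trans (log_le_log (by norm_num) (by exact_mod_cast hq))
  have hnat : (Nat.log 10 q : ℝ) ≤ log q := by
    have h := natLog_le_logb q 10
    rw [Nat.cast_ofNat, logb] at h
    exact h.trans (div_le_self (by linarith) hlog10)
  linarith

lemma eight_ninths_pow_div_le {k m : ℕ} {ℓ : ℝ} (hm₀ : 0 < m) (hm : (m : ℝ) ≤ 3 * ℓ) :
    (8 / 9 : ℝ) ^ (k / 3 / m) ≤ 2 * exp (-(1 / 250) * log (10 ^ k) / ℓ) := by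
  set B := k / 3 / m
  have hk : (k : ℝ) ≤ 3 * (B + 1) * m := by
    have hlt : k / 3 < m * (B + 1) := Nat.lt_mul_div_succ (k / 3) hm₀
    have : 3 * (B + 1) * m = 3 * (m * (B + 1)) := by ring
    exact_mod_cast (show k ≤ 3 * (B + 1) * m by omega)
  have hℓ : 0 < ℓ := by
    have : (1 : ℝ) ≤ m := by exact_mod_cast hm₀
    linarith
  have hlog10 : log 10 < 3 := by
    rw [log_lt_iff_lt_exp (by norm_num), show (3 : ℝ) = 1 + 1 + 1 by norm_num, exp_add, exp_add]
    nlinarith [exp_one_gt_d9]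
  -- `k log 10 ≤ 3 k ≤ 27 (B + 1) ℓ` and `9 · 27 ≤ 250`
  have hexponent : (1 / 250) * log (10 ^ k) / ℓ ≤ (B + 1) / 9 := by
    rw [Real.log_pow, div_le_div_iff₀ hℓ (by norm_num)]
    nlinarith [Nat.cast_nonneg (α := ℝ) k, Nat.cast_nonneg (α := ℝ) B]
  calc (8 / 9 : ℝ) ^ B = 9 / 8 * (8 / 9) ^ (B + 1) := by ring
    _ ≤ 2 * exp (-1 / 9) ^ (B + 1) := by
        gcongr
        · norm_num
        · linarith [add_one_le_exp (-1 / 9 : ℝ)]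
    _ = 2 * exp (-((B + 1) / 9)) := by rw [← exp_nat_mul]; push_cast; ring_nf
    _ ≤ 2 * exp (-(1 / 250) * log (10 ^ k) / ℓ) := by
        gcongr
        rw [neg_mul, neg_div]
        exact neg_le_neg hexponent

theorem stmt_5 : ∃ C c : ℝ, 0 < C ∧ 0 < c ∧
    ∀ (a₀ k q₁ q₂ : ℕ) (η : ℝ) (a : ℤ),
      a₀ ≤ 9 → 0 < q₂ → Nat.gcd q₁ 10 = 1 → 1 < q₁ →
      ((q₁ * q₂ : ℕ) : ℝ) < ((10 : ℝ)^k) ^ ((1 : ℝ)/3) →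
      |η| < ((10 : ℝ)^k) ^ (-(2 : ℝ)/3) / 2 →
      IsCoprime a ((q₁ * q₂ : ℕ) : ℤ) →
      F a₀ k ((a : ℝ) / ((q₁ * q₂ : ℕ) : ℝ) + η)
        ≤ C * Real.exp (-c * Real.log ((10 : ℝ)^k) / Real.log ((q₁ * q₂ : ℕ) : ℝ)) := by
  refine ⟨2, 1 / 250, by norm_num, by norm_num, ?_⟩
  intro a₀ k q₁ q₂ η a ha₀ hq₂ hq₁10 hq₁ hqY hη ha
  have hq : 2 ≤ q₁ * q₂ := le_mul_of_le_of_one_le hq₁ hq₂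
  have hfar : ∀ i ≤ k / 3, 1 / (2 * (q₁ * q₂ : ℕ)) ≤
      intDist (10 ^ i * ((a : ℝ) / (q₁ * q₂ : ℕ) + η)) := fun i hi =>
    one_div_two_mul_le_intDist_ten_pow_mul hq₁ hq₁10 hq₂ ha hqY hη (by omega)
  calc F a₀ k _ ≤ (8 / 9) ^ ((range k).filter fun j =>
          1 / 20 ≤ intDist (10 ^ j * ((a : ℝ) / (q₁ * q₂ : ℕ) + η))).card :=
        F_le_pow_card ha₀ k _
    _ ≤ (8 / 9) ^ (k / 3 / (Nat.log 10 (q₁ * q₂) + 1)) :=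
        pow_le_pow_of_le_one (by norm_num) (by norm_num) (le_card_filter_intDist_ten_pow_mul_ge
          (Nat.div_le_self k 3) hfar (one_div_twenty_le_ten_pow_log_mul (by omega)))
    _ ≤ _ := eight_ninths_pow_div_le (Nat.succ_pos _) (by exact_mod_cast natLog_add_one_le hq)
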